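/- arXiv:2112.13594 — 2 statements merged into one kernel-verified Lean document; each statement's English description precedes it below -/
import Mathlib

section
/- Assume for every x ∈ 𝒳 there exists x̂ ∈ 𝒳̂ with d(x,x̂) = 0, and fix δ > 0 and ε > 0 with δ ≤ D. Then there exists a sequence ε_n → 0 such that for every n and every x ∈ 𝒳^n the following holds: letting P*(x̂|x) be any conditional distribution achieving R(D−δ, P̂_x) and Q(x̂) = Σ_{x∈𝒳} P̂_x(x) P*(x̂|x) the induced reconstruction distribution, one has Σ_{x̂ ∈ 𝒳̂^n : d(x,x̂) ≤ nD} Π_{i=1}^n Q(x̂_i) ≥ (1 − 2ε_n) · 2^{−n [R(D−δ, P̂_x) + ε]}. -/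
open scoped BigOperators Classical
open Filter

section Defs

/-- A probability mass function on a finite alphabet. -/
def IsPMF {α : Type*} [Fintype α] (p : α → ℝ) : Prop :=
  (∀ a, 0 ≤ p a) ∧ ∑ a, p a = 1

/-- A conditional probability mass function (a channel / test channel). -/
def IsCondPMF {α β : Type*} [Fintype α] [Fintype β] (W : α → β → ℝ) : Prop :=
  ∀ a, IsPMF (W a)

/-- Base-2 Kullback–Leibler divergence `D(Q‖P)`. -/
noncomputable def klDiv2 {α : Type*} [Fintype α] (Q P : α → ℝ) : ℝ :=
  ∑ a, Q a * Real.logb 2 (Q a / P a)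

/-- Base-2 mutual information `I(X;X̂)` of the joint law `Q(a) W(b|a)`. -/
noncomputable def mutInf2 {α β : Type*} [Fintype α] [Fintype β]
    (Q : α → ℝ) (W : α → β → ℝ) : ℝ :=
  ∑ a, ∑ b, Q a * W a b * Real.logb 2 (W a b / (∑ a', Q a' * W a' b))

/-- The rate–distortion function `R(D,Q)` (base 2). -/
noncomputable def RD {X Xh : Type*} [Fintype X] [Fintype Xh]
    (d : X → Xh → ℝ) (D : ℝ) (Q : X → ℝ) : ℝ :=
  sInf { r | ∃ V : X → Xh → ℝ, IsCondPMF V ∧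
    (∑ x, ∑ xh, Q x * V x xh * d x xh) ≤ D ∧ r = mutInf2 Q V }

/-- Empirical distribution of a sequence. -/
noncomputable def empDist {X : Type*} [Fintype X] {n : ℕ} (x : Fin n → X) : X → ℝ :=
  fun a => ((Finset.univ.filter (fun i => x i = a)).card : ℝ) / n

/-- Base-2 empirical entropy of a sequence. -/
noncomputable def empEnt {X : Type*} [Fintype X] {n : ℕ} (x : Fin n → X) : ℝ :=
  - ∑ a, empDist x a * Real.logb 2 (empDist x a)

/-- Additive (per-block) distortion between sequences. -/
noncomputable def dSeq {X Xh : Type*} {n : ℕ} (d : X → Xh → ℝ)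
    (x : Fin n → X) (xh : Fin n → Xh) : ℝ :=
  ∑ i, d (x i) (xh i)

/-- The universal guessing distribution `P̃(x̂) ∝ 2^{-n Ĥ_x̂}` on `𝒳̂ⁿ`. -/
noncomputable def univDist {Xh : Type*} [Fintype Xh] {n : ℕ} (xh : Fin n → Xh) : ℝ :=
  (2 : ℝ) ^ (-(n : ℝ) * empEnt xh) / ∑ z : Fin n → Xh, (2 : ℝ) ^ (-(n : ℝ) * empEnt z)

/-- Probability of the distortion ball `S(x)` under the universal distribution. -/
noncomputable def univDistBall {X Xh : Type*} [Fintype Xh] {n : ℕ}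
    (d : X → Xh → ℝ) (D : ℝ) (x : Fin n → X) : ℝ :=
  ∑ xh ∈ Finset.univ.filter (fun xh : Fin n → Xh => dSeq d x xh ≤ (n : ℝ) * D), univDist xh

end Defs

/-!
Let `Wⁿ(·|x) = ∏ᵢ P*(·|xᵢ)` be the output law of the test channel on input `x`, and `Qⁿ = ∏ᵢ Q`.
Under `Wⁿ` the distortion `d(x, X̂)` is a sum of independent terms with total mean at most
`n(D - δ)` and variance `O(n)`, so by Chebyshev the ball `d(x, x̂) ≤ nD` has `Wⁿ`-probability
`p ≥ 1 - O(1/n)`. Jensen's inequality for `exp`, with the weights `Wⁿ/p` on the ball, turns this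
into `Qⁿ(ball) ≥ p · exp(-(D(Wⁿ‖Qⁿ) + 1)/p)`, where, in nats,
`D(Wⁿ‖Qⁿ) = n I(P̂_x, P*) ln 2 ≤ n log |𝒳̂|`. For large `n` the losses due to `p < 1` and to the
`+1` are absorbed by the slack `nε`; for the finitely many remaining `n` one takes `ε_n = 1`.
-/

open Real Finset

section ProductWeights

variable {ι β : Type*} [Fintype ι] [DecidableEq ι] [Fintype β]

theorem sum_prod_eq_one (W : ι → β → ℝ) (hW : ∀ i, ∑ b, W i b = 1) :
    ∑ ω : ι → β, ∏ i, W i (ω i) = 1 := by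
  rw [← Fintype.prod_sum]
  simp [hW]

theorem sum_prod_mul_prod_eq_prod_sum (W f : ι → β → ℝ) (hW : ∀ i, ∑ b, W i b = 1)
    (S : Finset ι) :
    ∑ ω : ι → β, (∏ i, W i (ω i)) * ∏ i ∈ S, f i (ω i) = ∏ i ∈ S, ∑ b, W i b * f i b := by
  have hsplit : ∀ ω : ι → β, (∏ i, W i (ω i)) * ∏ i ∈ S, f i (ω i) =
      ∏ i, W i (ω i) * (if i ∈ S then f i (ω i) else 1) := by
    intro ω
    rw [prod_mul_distrib, prod_ite_mem, univ_inter]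
  have hrow : ∀ i, ∑ b, W i b * (if i ∈ S then f i b else 1) =
      if i ∈ S then ∑ b, W i b * f i b else 1 := by
    intro i
    split_ifs <;> simp [hW]
  rw [sum_congr rfl fun ω _ => hsplit ω,
    ← Fintype.prod_sum fun i b => W i b * if i ∈ S then f i b else 1]
  simp_rw [hrow, prod_ite_mem, univ_inter]

theorem sum_prod_mul_sum (W f : ι → β → ℝ) (hW : ∀ i, ∑ b, W i b = 1) :
    ∑ ω : ι → β, (∏ i, W i (ω i)) * ∑ i, f i (ω i) = ∑ i, ∑ b, W i b * f i b := by
  simp_rw [mul_sum]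
  rw [sum_comm]
  refine sum_congr rfl fun i _ => ?_
  simpa using sum_prod_mul_prod_eq_prod_sum W f hW {i}

theorem sum_prod_mul_sum_sq (W f : ι → β → ℝ) (hW : ∀ i, ∑ b, W i b = 1)
    (hf : ∀ i, ∑ b, W i b * f i b = 0) :
    ∑ ω : ι → β, (∏ i, W i (ω i)) * (∑ i, f i (ω i)) ^ 2 = ∑ i, ∑ b, W i b * f i b ^ 2 := by
  have hpair : ∀ i j, ∑ ω : ι → β, (∏ k, W k (ω k)) * (f i (ω i) * f j (ω j)) =
      if i = j then ∑ b, W i b * (f i b * f i b) else 0 := by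
    intro i j
    split_ifs with hij
    · subst hij
      simpa using sum_prod_mul_prod_eq_prod_sum W (fun _ b => f i b * f i b) hW {i}
    · simpa [prod_pair hij, hf] using sum_prod_mul_prod_eq_prod_sum W f hW {i, j}
  simp_rw [sq, sum_mul_sum, mul_sum]
  rw [sum_comm]
  refine sum_congr rfl fun i _ => ?_
  rw [sum_comm]
  simp_rw [hpair, sum_ite_eq, if_pos (mem_univ _)]

theorem sum_prod_mul_log_div_prod (W V : ι → β → ℝ) (hW0 : ∀ i b, 0 ≤ W i b)
    (hW : ∀ i, ∑ b, W i b = 1) (hWV : ∀ i b, 0 < W i b → 0 < V i b) :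
    ∑ ω : ι → β, (∏ i, W i (ω i)) * log ((∏ i, W i (ω i)) / ∏ i, V i (ω i)) =
      ∑ i, ∑ b, W i b * log (W i b / V i b) := by
  rw [← sum_prod_mul_sum W (fun i b => log (W i b / V i b)) hW]
  refine sum_congr rfl fun ω _ => ?_
  rcases (prod_nonneg fun i _ => hW0 i (ω i)).eq_or_lt with h | h
  · rw [← h, zero_mul, zero_mul]
  · have hpos : ∀ i, 0 < W i (ω i) := fun i =>
      (hW0 i (ω i)).lt_of_ne' (prod_ne_zero_iff.mp h.ne' i (mem_univ i))
    rw [← prod_div_distrib, log_prod]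
    exact fun i _ => (div_pos (hpos i) (hWV i _ (hpos i))).ne'

end ProductWeights

section Inequalities

variable {Ω : Type*}

theorem sum_le_sum_mul_sq_div_sq [Fintype Ω] (P g : Ω → ℝ) (hP : ∀ ω, 0 ≤ P ω) {t : ℝ} (ht : 0 < t)
    (s : Finset Ω) (hs : ∀ ω ∈ s, t ≤ |g ω|) :
    ∑ ω ∈ s, P ω ≤ (∑ ω, P ω * g ω ^ 2) / t ^ 2 := by
  rw [le_div_iff₀ (by positivity), sum_mul]
  calc ∑ ω ∈ s, P ω * t ^ 2 ≤ ∑ ω ∈ s, P ω * g ω ^ 2 := by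
        refine sum_le_sum fun ω hω => mul_le_mul_of_nonneg_left ?_ (hP ω)
        rw [← sq_abs (g ω)]
        exact pow_le_pow_left₀ ht.le (hs ω hω) 2
    _ ≤ ∑ ω, P ω * g ω ^ 2 :=
        sum_le_sum_of_subset_of_nonneg (subset_univ s) fun ω _ _ =>
          mul_nonneg (hP ω) (sq_nonneg _)

theorem sum_mul_sub_sq_le_sum_mul_sq [Fintype Ω] (W g : Ω → ℝ) (hW : ∑ ω, W ω = 1) :
    ∑ ω, W ω * (g ω - ∑ ω', W ω' * g ω') ^ 2 ≤ ∑ ω, W ω * g ω ^ 2 := by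
  set μ := ∑ ω', W ω' * g ω'
  have hexpand : ∑ ω, W ω * (g ω - μ) ^ 2 = ∑ ω, W ω * g ω ^ 2 - μ ^ 2 := by
    have : ∀ ω, W ω * (g ω - μ) ^ 2 = W ω * g ω ^ 2 - 2 * μ * (W ω * g ω) + μ ^ 2 * W ω := by
      intro ω; ring
    simp_rw [this, sum_add_distrib, sum_sub_distrib, ← mul_sum, hW]
    ring
  linarith [sq_nonneg μ]

theorem sub_le_mul_log_div {p q : ℝ} (hp : 0 ≤ p) (hq : 0 ≤ q) (hpq : 0 < p → 0 < q) :
    p - q ≤ p * log (p / q) := by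
  rcases hp.eq_or_lt with rfl | hp
  · simpa using hq
  · have hq := hpq hp
    have hlog := one_sub_inv_le_log_of_pos (div_pos hp hq)
    rw [inv_div] at hlog
    calc p - q = p * (1 - q / p) := by field_simp
      _ ≤ p * log (p / q) := mul_le_mul_of_nonneg_left hlog hp.le

theorem sum_sub_sum_le_sum_mul_log_div (P Q : Ω → ℝ) (hP : ∀ ω, 0 ≤ P ω) (hQ : ∀ ω, 0 ≤ Q ω)
    (hPQ : ∀ ω, 0 < P ω → 0 < Q ω) (s : Finset Ω) :
    ∑ ω ∈ s, P ω - ∑ ω ∈ s, Q ω ≤ ∑ ω ∈ s, P ω * log (P ω / Q ω) := by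
  rw [← sum_sub_distrib]
  exact sum_le_sum fun ω _ => sub_le_mul_log_div (hP ω) (hQ ω) (hPQ ω)

theorem sum_negMulLog_le_log_card [Fintype Ω] (q : Ω → ℝ) (hq : IsPMF q) :
    ∑ ω, negMulLog (q ω) ≤ log (Fintype.card Ω) := by
  have hcard : (0 : ℝ) < Fintype.card Ω := by
    have hne : (univ : Finset Ω).Nonempty := by
      by_contra h
      simpa [not_nonempty_iff_eq_empty.mp h] using hq.2
    exact_mod_cast card_pos.mpr hne
  have hgibbs := sum_sub_sum_le_sum_mul_log_div q (fun _ => 1 / Fintype.card Ω) hq.1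
    (fun _ => by positivity) (fun _ _ => by positivity) univ
  have hterm : ∀ ω, q ω * log (q ω / (1 / Fintype.card Ω)) =
      log (Fintype.card Ω) * q ω - negMulLog (q ω) := by
    intro ω
    rcases (hq.1 ω).eq_or_lt with h | h
    · simp [← h]
    · rw [one_div, div_inv_eq_mul, log_mul h.ne' hcard.ne', negMulLog]
      ring
  simp only [hterm, sum_sub_distrib, ← mul_sum, hq.2, sum_const, card_univ, nsmul_eq_mul] at hgibbs
  field_simp at hgibbs
  linarith

theorem sum_prod_le_sum_sq_div_sq {ι β : Type*} [Fintype ι] [DecidableEq ι] [Fintype β]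
    (W f : ι → β → ℝ) (hW0 : ∀ i b, 0 ≤ W i b) (hW : ∀ i, ∑ b, W i b = 1)
    (hf : ∀ i, ∑ b, W i b * f i b = 0) {t : ℝ} (ht : 0 < t) (s : Finset (ι → β))
    (hs : ∀ ω ∈ s, t ≤ |∑ i, f i (ω i)|) :
    ∑ ω ∈ s, ∏ i, W i (ω i) ≤ (∑ i, ∑ b, W i b * f i b ^ 2) / t ^ 2 := by
  rw [← sum_prod_mul_sum_sq W f hW hf]
  exact sum_le_sum_mul_sq_div_sq _ _ (fun ω => prod_nonneg fun i _ => hW0 i (ω i)) ht s hs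

end Inequalities

section ChangeOfMeasure

variable {Ω : Type*} [Fintype Ω]

theorem mul_exp_neg_le_sum (P Q : Ω → ℝ) (hP : ∀ ω, 0 ≤ P ω) (hQ : ∀ ω, 0 ≤ Q ω)
    (hQ1 : ∑ ω, Q ω ≤ 1) (hPQ : ∀ ω, 0 < P ω → 0 < Q ω) (s : Finset Ω)
    (hs : 0 < ∑ ω ∈ s, P ω) :
    (∑ ω ∈ s, P ω) * exp (-(∑ ω, P ω * log (P ω / Q ω) + 1) / ∑ ω ∈ s, P ω) ≤
      ∑ ω ∈ s, Q ω := by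
  set p := ∑ ω ∈ s, P ω
  have hrest : -1 ≤ ∑ ω ∈ sᶜ, P ω * log (P ω / Q ω) :=
    calc -1 ≤ -∑ ω ∈ sᶜ, Q ω := by
          linarith [sum_le_sum_of_subset_of_nonneg (subset_univ sᶜ) fun ω _ _ => hQ ω]
      _ ≤ ∑ ω ∈ sᶜ, P ω - ∑ ω ∈ sᶜ, Q ω := by linarith [sum_nonneg fun ω (_ : ω ∈ sᶜ) => hP ω]
      _ ≤ _ := sum_sub_sum_le_sum_mul_log_div P Q hP hQ hPQ sᶜ
  have hsplit := sum_add_sum_compl s fun ω => P ω * log (P ω / Q ω)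
  have hjensen : exp (∑ ω ∈ s, (P ω / p) * -log (P ω / Q ω)) ≤ ∑ ω ∈ s, Q ω / p := by
    refine (convexOn_exp.map_sum_le (fun ω _ => div_nonneg (hP ω) hs.le)
      (by rw [← sum_div, div_self hs.ne']) fun ω _ => Set.mem_univ _).trans
      (sum_le_sum fun ω _ => ?_)
    rcases (hP ω).eq_or_lt with h | h
    · simp [← h, div_nonneg (hQ ω) hs.le]
    · rw [smul_eq_mul, exp_neg, exp_log (div_pos h (hPQ ω h)), inv_div]
      exact (by field_simp : P ω / p * (Q ω / P ω) = Q ω / p).le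
  have hexponent : -(∑ ω, P ω * log (P ω / Q ω) + 1) / p ≤
      ∑ ω ∈ s, (P ω / p) * -log (P ω / Q ω) := by
    have : ∑ ω ∈ s, (P ω / p) * -log (P ω / Q ω) = -(∑ ω ∈ s, P ω * log (P ω / Q ω)) / p := by
      rw [neg_div, sum_div, ← sum_neg_distrib]
      exact sum_congr rfl fun ω _ => by ring
    rw [this]
    exact div_le_div_of_nonneg_right (by linarith) hs.le
  calc p * exp (-(∑ ω, P ω * log (P ω / Q ω) + 1) / p)
      ≤ p * ∑ ω ∈ s, Q ω / p :=
        mul_le_mul_of_nonneg_left ((exp_le_exp.mpr hexponent).trans hjensen) hs.le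
    _ = ∑ ω ∈ s, Q ω := by rw [← sum_div]; field_simp

end ChangeOfMeasure

theorem mul_exp_neg_le_mul_exp_neg {A e η p : ℝ} (hA : 0 ≤ A) (hη : 0 ≤ η) (hη2 : η ≤ 1 / 2)
    (hp : 1 - η ≤ p) (he : 2 * η * (A + 1) + 1 ≤ e) :
    (1 - 2 * η) * exp (-(A + e)) ≤ p * exp (-(A + 1) / p) := by
  have hp0 : 0 < p := by linarith
  have hexp : (A + 1) / p ≤ A + e := by
    rw [div_le_iff₀ hp0]
    nlinarith [mul_nonneg hη hA, mul_nonneg (mul_nonneg hη hA) (by linarith : 0 ≤ 1 - 2 * η)]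
  gcongr
  · linarith
  · rw [neg_div]
    exact neg_le_neg hexp

section MutualInformation

variable {α β : Type*} [Fintype α] [Fintype β]

noncomputable def outputDist (Q : α → ℝ) (W : α → β → ℝ) : β → ℝ :=
  fun b => ∑ a, Q a * W a b

theorem outputDist_nonneg {Q : α → ℝ} {W : α → β → ℝ} (hQ : ∀ a, 0 ≤ Q a) (hW : IsCondPMF W)
    (b : β) : 0 ≤ outputDist Q W b :=
  sum_nonneg fun a _ => mul_nonneg (hQ a) ((hW a).1 b)

theorem IsPMF.outputDist {Q : α → ℝ} {W : α → β → ℝ} (hQ : IsPMF Q) (hW : IsCondPMF W) :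
    IsPMF (outputDist Q W) := by
  refine ⟨outputDist_nonneg hQ.1 hW, ?_⟩
  simp only [_root_.outputDist]
  rw [sum_comm]
  simp [← mul_sum, (hW _).2, hQ.2]

theorem outputDist_pos {Q : α → ℝ} {W : α → β → ℝ} (hQ : ∀ a, 0 ≤ Q a) (hW : IsCondPMF W)
    {a : α} {b : β} (ha : 0 < Q a) (hb : 0 < W a b) : 0 < outputDist Q W b :=
  (mul_pos ha hb).trans_le <| single_le_sum (f := fun a => Q a * W a b)
    (fun a _ => mul_nonneg (hQ a) ((hW a).1 b)) (mem_univ a)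

theorem mutInf2_mul_log_two (Q : α → ℝ) (W : α → β → ℝ) :
    mutInf2 Q W * log 2 = ∑ a, Q a * ∑ b, W a b * log (W a b / outputDist Q W b) := by
  simp only [mutInf2, logb, sum_mul, mul_sum, outputDist]
  refine sum_congr rfl fun a _ => sum_congr rfl fun b _ => ?_
  field_simp

theorem mutInf2_nonneg {Q : α → ℝ} {W : α → β → ℝ} (hQ : IsPMF Q) (hW : IsCondPMF W) :
    0 ≤ mutInf2 Q W := by
  have hO := hQ.outputDist hW
  suffices 0 ≤ mutInf2 Q W * log 2 from nonneg_of_mul_nonneg_left this (log_pos one_lt_two)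
  rw [mutInf2_mul_log_two]
  refine sum_nonneg fun a _ => ?_
  rcases (hQ.1 a).eq_or_lt with ha | ha
  · rw [← ha, zero_mul]
  · refine mul_nonneg ha.le ?_
    have := sum_sub_sum_le_sum_mul_log_div (W a) (outputDist Q W) (hW a).1 hO.1
      (fun b hb => outputDist_pos hQ.1 hW ha hb) univ
    rwa [(hW a).2, hO.2, sub_self] at this

theorem mutInf2_mul_log_two_le_log_card {Q : α → ℝ} {W : α → β → ℝ} (hQ : IsPMF Q)
    (hW : IsCondPMF W) : mutInf2 Q W * log 2 ≤ log (Fintype.card β) := by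
  have hO := hQ.outputDist hW
  have hterm : ∀ a b, Q a * (W a b * log (W a b / outputDist Q W b)) ≤
      Q a * W a b * -log (outputDist Q W b) := by
    intro a b
    rcases (hQ.1 a).eq_or_lt with ha | ha
    · simp [← ha]
    rcases ((hW a).1 b).eq_or_lt with hb | hb
    · simp [← hb]
    have hO_pos := outputDist_pos hQ.1 hW ha hb
    have hW_le : W a b ≤ 1 :=
      (hW a).2 ▸ single_le_sum (fun b _ => (hW a).1 b) (mem_univ b)
    rw [mul_assoc, ← log_inv]
    refine mul_le_mul_of_nonneg_left (mul_le_mul_of_nonneg_left ?_ hb.le) ha.le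
    exact log_le_log (div_pos hb hO_pos)
      ((div_le_div_of_nonneg_right hW_le hO_pos.le).trans_eq (one_div _))
  calc mutInf2 Q W * log 2
      ≤ ∑ a, ∑ b, Q a * W a b * -log (outputDist Q W b) := by
        rw [mutInf2_mul_log_two]
        exact sum_le_sum fun a _ => by rw [mul_sum]; exact sum_le_sum fun b _ => hterm a b
    _ = ∑ b, negMulLog (outputDist Q W b) := by
        rw [sum_comm]
        simp only [← sum_mul, negMulLog, outputDist]
        exact sum_congr rfl fun b _ => by ring
    _ ≤ log (Fintype.card β) := sum_negMulLog_le_log_card _ hO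

end MutualInformation

section EmpiricalDistribution

variable {X : Type*} [Fintype X] {n : ℕ}

theorem sum_comp_eq_mul_sum_empDist (x : Fin n → X) (g : X → ℝ) :
    ∑ i, g (x i) = n * ∑ a, empDist x a * g a := by
  rw [← sum_fiberwise' univ x g, mul_sum]
  refine sum_congr rfl fun a _ => ?_
  rcases Nat.eq_zero_or_pos n with rfl | hn
  · simp
  · rw [sum_const, nsmul_eq_mul, empDist]
    field_simp

theorem empDist_nonneg (x : Fin n → X) (a : X) : 0 ≤ empDist x a := by
  unfold empDist
  positivity

theorem isPMF_empDist (hn : 0 < n) (x : Fin n → X) : IsPMF (empDist x) := by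
  refine ⟨empDist_nonneg x, ?_⟩
  have h := sum_comp_eq_mul_sum_empDist x fun _ => 1
  simp only [sum_const, card_univ, Fintype.card_fin, nsmul_eq_mul, mul_one] at h
  exact (mul_eq_left₀ (by positivity)).mp h.symm

theorem empDist_pos (x : Fin n → X) (i : Fin n) : 0 < empDist x (x i) := by
  unfold empDist
  have : 0 < (univ.filter fun j => x j = x i).card := card_pos.mpr ⟨i, by simp⟩
  have : 0 < n := i.pos
  positivity

end EmpiricalDistribution

section DistortionBall

variable {X Xh : Type*} [Fintype X] [Fintype Xh] {n : ℕ}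

theorem one_sub_le_sum_prod_ball (d : X → Xh → ℝ) {D δ M : ℝ} (hδ : 0 < δ)
    (hM : ∀ a b, d a b ^ 2 ≤ M) (hn : 0 < n) (x : Fin n → X) {P : X → Xh → ℝ}
    (hP : IsCondPMF P) (hdist : ∑ a, ∑ b, empDist x a * P a b * d a b ≤ D - δ) :
    1 - M / (δ ^ 2 * n) ≤
      ∑ ω ∈ univ.filter (fun ω : Fin n → Xh => dSeq d x ω ≤ n * D), ∏ i, P (x i) (ω i) := by
  set μ : Fin n → ℝ := fun i => ∑ b, P (x i) b * d (x i) b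
  set f : Fin n → Xh → ℝ := fun i b => d (x i) b - μ i
  have hW : ∀ i, ∑ b, P (x i) b = 1 := fun i => (hP (x i)).2
  have hmean : ∀ i, ∑ b, P (x i) b * f i b = 0 := fun i => by
    simp [f, mul_sub, sum_sub_distrib, ← sum_mul, hW, μ]
  have hμ : ∑ i, μ i ≤ n * (D - δ) := by
    rw [sum_comp_eq_mul_sum_empDist x fun a => ∑ b, P a b * d a b]
    refine mul_le_mul_of_nonneg_left (le_of_eq_of_le (sum_congr rfl fun a _ => ?_) hdist)
      n.cast_nonneg
    rw [mul_sum]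
    exact sum_congr rfl fun b _ => by ring
  have hvar_row : ∀ i, ∑ b, P (x i) b * f i b ^ 2 ≤ M := fun i =>
    calc ∑ b, P (x i) b * f i b ^ 2 ≤ ∑ b, P (x i) b * d (x i) b ^ 2 :=
          sum_mul_sub_sq_le_sum_mul_sq _ _ (hW i)
      _ ≤ ∑ b, P (x i) b * M :=
          sum_le_sum fun b _ => mul_le_mul_of_nonneg_left (hM _ b) ((hP _).1 b)
      _ = M := by rw [← sum_mul, hW, one_mul]
  have hvar : ∑ i, ∑ b, P (x i) b * f i b ^ 2 ≤ n * M :=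
    (sum_le_sum fun i _ => hvar_row i).trans_eq (by simp)
  have hfar : ∀ ω ∈ univ.filter (fun ω : Fin n → Xh => ¬ dSeq d x ω ≤ n * D),
      n * δ ≤ |∑ i, f i (ω i)| := by
    intro ω hω
    have hω : n * D < dSeq d x ω := not_le.mp (mem_filter.mp hω).2
    have : ∑ i, f i (ω i) = dSeq d x ω - ∑ i, μ i := sum_sub_distrib _ _
    exact le_abs.mpr (Or.inl (by rw [this]; nlinarith))
  have hfar_small := sum_prod_le_sum_sq_div_sq (fun i => P (x i)) f (fun i => (hP _).1) hW hmean
    (by positivity) _ hfar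
  have hsplit := sum_filter_add_sum_filter_not univ (fun ω : Fin n → Xh => dSeq d x ω ≤ n * D)
    fun ω => ∏ i, P (x i) (ω i)
  rw [sum_prod_eq_one _ hW] at hsplit
  have hnpos : (0 : ℝ) < n := by exact_mod_cast hn
  have : (∑ i, ∑ b, P (x i) b * f i b ^ 2) / (n * δ) ^ 2 ≤ M / (δ ^ 2 * n) := by
    rw [div_le_div_iff₀ (by positivity) (by positivity)]
    nlinarith [sq_nonneg δ]
  linarith

theorem mul_exp_neg_le_sum_prod_outputDist (hn : 0 < n) (x : Fin n → X) {P : X → Xh → ℝ}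
    (hP : IsCondPMF P) (s : Finset (Fin n → Xh)) (hs : 0 < ∑ ω ∈ s, ∏ i, P (x i) (ω i)) :
    (∑ ω ∈ s, ∏ i, P (x i) (ω i)) *
        exp (-(n * (mutInf2 (empDist x) P * log 2) + 1) / ∑ ω ∈ s, ∏ i, P (x i) (ω i)) ≤
      ∑ ω ∈ s, ∏ i, outputDist (empDist x) P (ω i) := by
  have hemp := isPMF_empDist hn x
  have hO := hemp.outputDist hP
  have hkl : ∑ ω : Fin n → Xh, (∏ i, P (x i) (ω i)) *
      log ((∏ i, P (x i) (ω i)) / ∏ i, outputDist (empDist x) P (ω i)) =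
      n * (mutInf2 (empDist x) P * log 2) := by
    rw [sum_prod_mul_log_div_prod (fun i => P (x i)) (fun _ => outputDist (empDist x) P)
      (fun i => (hP _).1) (fun i => (hP _).2)
      (fun i _ hb => outputDist_pos hemp.1 hP (empDist_pos x i) hb),
      sum_comp_eq_mul_sum_empDist x fun a => ∑ b, P a b * log (P a b / outputDist (empDist x) P b),
      mutInf2_mul_log_two]
  rw [← hkl]
  refine mul_exp_neg_le_sum _ _ (fun ω => prod_nonneg fun i _ => (hP _).1 _)
    (fun ω => prod_nonneg fun i _ => hO.1 _) (sum_prod_eq_one _ fun _ => hO.2).le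
    (fun ω hω => prod_pos fun i _ => ?_) s hs
  have hi : 0 < P (x i) (ω i) :=
    ((hP _).1 _).lt_of_ne' (prod_ne_zero_iff.mp hω.ne' i (mem_univ i))
  exact outputDist_pos hemp.1 hP (empDist_pos x i) hi

theorem one_sub_two_mul_rpow_le_sum_ball (d : X → Xh → ℝ) {D δ M ε η : ℝ} (hδ : 0 < δ)
    (hM : ∀ a b, d a b ^ 2 ≤ M) (hn : 0 < n) (x : Fin n → X) {P : X → Xh → ℝ}
    (hP : IsCondPMF P) (hdist : ∑ a, ∑ b, empDist x a * P a b * d a b ≤ D - δ)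
    (hMη : M / (δ ^ 2 * n) ≤ η) (hη0 : 0 ≤ η) (hη : η ≤ 1 / 2)
    (hlarge : 2 * η * (n * log (Fintype.card Xh) + 1) + 1 ≤ n * (ε * log 2)) :
    (1 - 2 * η) * (2 : ℝ) ^ (-(n : ℝ) * (mutInf2 (empDist x) P + ε)) ≤
      ∑ ω ∈ univ.filter (fun ω : Fin n → Xh => dSeq d x ω ≤ n * D),
        ∏ i, outputDist (empDist x) P (ω i) := by
  have hp := one_sub_le_sum_prod_ball d hδ hM hn x hP hdist
  have hemp := isPMF_empDist hn x
  have hnR : (0 : ℝ) < n := by exact_mod_cast hn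
  set A := n * (mutInf2 (empDist x) P * log 2) with hA_def
  have hA : 0 ≤ A :=
    mul_nonneg hnR.le (mul_nonneg (mutInf2_nonneg hemp hP) (log_nonneg one_le_two))
  have hAK : η * A ≤ η * (n * log (Fintype.card Xh)) :=
    mul_le_mul_of_nonneg_left
      (mul_le_mul_of_nonneg_left (mutInf2_mul_log_two_le_log_card hemp hP) hnR.le) hη0
  have hrpow : (2 : ℝ) ^ (-(n : ℝ) * (mutInf2 (empDist x) P + ε)) =
      exp (-(A + n * (ε * log 2))) := by
    rw [rpow_def_of_pos two_pos, hA_def]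
    ring_nf
  rw [hrpow]
  exact (mul_exp_neg_le_mul_exp_neg hA hη0 hη (by linarith) (by linarith)).trans
    (mul_exp_neg_le_sum_prod_outputDist hn x hP _ (by linarith))

end DistortionBall

theorem induced_reconstruction_ball_lower_bound_general
    {X Xh : Type*} [Fintype X] [Fintype Xh]
    (d : X → Xh → ℝ) (D : ℝ)
    (δ : ℝ) (hδ : 0 < δ) (ε : ℝ) (hε : 0 < ε) :
    ∃ εseq : ℕ → ℝ, Tendsto εseq atTop (nhds 0) ∧
      ∀ (n : ℕ) (x : Fin n → X) (Pstar : X → Xh → ℝ),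
        IsCondPMF Pstar →
        (∑ a, ∑ b, empDist x a * Pstar a b * d a b) ≤ D - δ →
        mutInf2 (empDist x) Pstar = RD d (D - δ) (empDist x) →
        (1 - 2 * εseq n) * (2 : ℝ) ^ (-(n : ℝ) * (RD d (D - δ) (empDist x) + ε)) ≤
          ∑ xh ∈ Finset.univ.filter (fun xh : Fin n → Xh => dSeq d x xh ≤ (n : ℝ) * D),
            ∏ i, (∑ a, empDist x a * Pstar a (xh i)) := by
  set M := ∑ a, ∑ b, d a b ^ 2
  have hM : ∀ a b, d a b ^ 2 ≤ M := fun a b =>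
    (single_le_sum (fun b _ => sq_nonneg (d a b)) (mem_univ b)).trans
      (single_le_sum (f := fun a => ∑ b, d a b ^ 2)
        (fun a _ => sum_nonneg fun b _ => sq_nonneg _) (mem_univ a))
  set c := M / δ ^ 2
  set K := log (Fintype.card Xh)
  have hlarge : ∀ᶠ n : ℕ in atTop,
      1 ≤ n ∧ 2 * c ≤ n ∧ 2 * c * K + 2 * c + 1 ≤ n * (ε * log 2) :=
    (eventually_ge_atTop 1).and <| (tendsto_natCast_atTop_atTop.eventually_ge_atTop _).and <|
      (tendsto_natCast_atTop_atTop.atTop_mul_const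
        (mul_pos hε (log_pos one_lt_two))).eventually_ge_atTop _
  obtain ⟨N, hN⟩ := eventually_atTop.mp hlarge
  refine ⟨fun n => if n < N then 1 else c / n, ?_, ?_⟩
  · refine (tendsto_const_div_atTop_nhds_zero_nat c).congr' ?_
    filter_upwards [eventually_ge_atTop N] with n hn
    rw [if_neg (not_lt.mpr hn)]
  intro n x P hP hdist hach
  rw [← hach]
  change (1 - 2 * if n < N then 1 else c / n) * _ ≤
    ∑ xh ∈ univ.filter (fun xh : Fin n → Xh => dSeq d x xh ≤ n * D),
      ∏ i, outputDist (empDist x) P (xh i)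
  split_ifs with hnN
  · exact (mul_nonpos_of_nonpos_of_nonneg (by norm_num) (rpow_pos_of_pos two_pos _).le).trans
      (sum_nonneg fun xh _ => prod_nonneg fun i _ => outputDist_nonneg (empDist_nonneg x) hP _)
  obtain ⟨hn, hc2, hbig⟩ := hN n (not_lt.mp hnN)
  have hn1 : (1 : ℝ) ≤ n := by exact_mod_cast hn
  have hcn : c / n ≤ c := div_le_self (by positivity) hn1
  refine one_sub_two_mul_rpow_le_sum_ball d hδ hM hn x hP hdist (div_div M _ _).ge
    (by positivity) (by rw [div_le_iff₀ (by positivity)]; linarith) ?_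
  calc 2 * (c / n) * (n * K + 1) + 1 = 2 * c * K + 2 * (c / n) + 1 := by field_simp
    _ ≤ n * (ε * log 2) := by linarith

/-- Assume every source letter has a zero-distortion reconstruction, and fix
`0 < δ ≤ D` and `ε > 0`. Then there is a sequence `ε_n → 0` such that for every `n`, every
`x ∈ 𝒳ⁿ`, and every conditional distribution `P*` achieving `R(D−δ, P̂_x)`, the induced
reconstruction distribution `Q(x̂) = Σ_x P̂_x(x) P*(x̂|x)` satisfies
`Σ_{x̂ : d(x,x̂) ≤ nD} Πᵢ Q(x̂ᵢ) ≥ (1 − 2ε_n) 2^{−n[R(D−δ,P̂_x) + ε]}`. -/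
theorem induced_reconstruction_ball_lower_bound
    {X Xh : Type*} [Fintype X] [Fintype Xh]
    (d : X → Xh → ℝ) (hd : ∀ x xh, 0 ≤ d x xh) (D : ℝ)
    (hcover : ∀ x : X, ∃ xh : Xh, d x xh = 0)
    (δ : ℝ) (hδ : 0 < δ) (hδD : δ ≤ D) (ε : ℝ) (hε : 0 < ε) :
    ∃ εseq : ℕ → ℝ, Tendsto εseq atTop (nhds 0) ∧
      ∀ (n : ℕ) (x : Fin n → X) (Pstar : X → Xh → ℝ),
        IsCondPMF Pstar →
        (∑ a, ∑ b, empDist x a * Pstar a b * d a b) ≤ D - δ →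
        mutInf2 (empDist x) Pstar = RD d (D - δ) (empDist x) →
        (1 - 2 * εseq n) * (2 : ℝ) ^ (-(n : ℝ) * (RD d (D - δ) (empDist x) + ε)) ≤
          ∑ xh ∈ Finset.univ.filter (fun xh : Fin n → Xh => dSeq d x xh ≤ (n : ℝ) * D),
            ∏ i, (∑ a, empDist x a * Pstar a (xh i)) :=
  induced_reconstruction_ball_lower_bound_general d D δ hδ ε hε
end

section
/- Assume for every x ∈ 𝒳 there exists x̂ ∈ 𝒳̂ with d(x,x̂) = 0. Let K, k, m be positive integers, n = m(K+k), and fix x ∈ 𝒳^n with K-type P̂^K_x. Fix δ > 0 and set D_max = max_{x,x̂} d(x,x̂), δ₂ = k(D_max − D)/K and D' = D − δ₂ − δ/K, assuming D' > 0. Let P* be any conditional distribution from 𝒳^K to 𝒳̂^K achieving R_K(D', P̂^K_x) and let Q^K(ŝ) = Σ_{s∈𝒳^K} P̂^K_x(s) P*(ŝ|s). Then for every ε > 0 there exists a sequence ε_m → 0 (uniform in x) such that Σ over (ŝ₁,…,ŝ_m) ∈ (𝒳̂^K)^m with Σ_{i=1}^m d(x̲_i, ŝ_i) ≤ mK(D−δ₂)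 of Π_{i=1}^m Q^K(ŝ_i) ≥ (1 − 2ε_m) · 2^{−m [R_K(D', P̂^K_x) + ε]}. -/
open scoped BigOperators Classical
open Filter

/-- The `i`-th length-`K` block of a sequence of length `m(K+k)` parsed into `m` blocks of
length `K` separated by gaps of length `k`. -/
def blockOf {X : Type*} {K k m : ℕ} (x : Fin (m * (K + k)) → X) (i : Fin m) :
    Fin K → X := fun j =>
  x ⟨i.1 * (K + k) + j.1, by
    have hi : i.1 + 1 ≤ m := i.2
    calc i.1 * (K + k) + j.1 < i.1 * (K + k) + (K + k) := by omega
      _ = (i.1 + 1) * (K + k) := by ring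
      _ ≤ m * (K + k) := Nat.mul_le_mul_right _ hi⟩

/-- The `K`-type of `x`: the empirical distribution on `𝒳^K` of its `m` blocks. -/
noncomputable def kType {X : Type*} [Fintype X] {K k m : ℕ}
    (x : Fin (m * (K + k)) → X) : (Fin K → X) → ℝ :=
  empDist (fun i : Fin m => blockOf x i)

/-!
Draw the reconstruction blocks `ŝ₁, …, ŝ_m` independently, `ŝᵢ` from the test channel
`P*(· | x̲ᵢ)`. Averaged over `i` these laws are the `K`-type `P̂ᴷ_x` pushed through `P*`, so
the expected total distortion is at most `mK D' = mK(D − δ₂) − mδ` and the expected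
information density `∑ᵢ log₂ (P*(ŝᵢ | x̲ᵢ) / Qᴷ(ŝᵢ))` is `m R_K(D', P̂ᴷ_x)`. Every block has
type mass at least `1/m`, so `Qᴷ(ŝ) ≥ P*(ŝ | x̲ᵢ) / m`, which bounds the second moment of each
information density by `O((log m)²)`. By Chebyshev's inequality, outside an event of
probability `O((log m)² / m)` the distortion stays within `mK(D − δ₂)` and the information
density within `m(R_K + ε)`; on the remaining event `∏ᵢ Qᴷ(ŝᵢ) ≥ 2^{−m(R_K + ε)} ∏ᵢ P*(ŝᵢ | x̲ᵢ)`.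
-/

open Finset Real

theorem prod_mul_rpow_neg_le_prod {ι : Type*} [Fintype ι] {p q : ι → ℝ} (hp : ∀ i, 0 ≤ p i)
    (hq : ∀ i, 0 ≤ q i) (hpq : ∀ i, 0 < p i → 0 < q i) {L : ℝ} (hL : ∑ i, logb 2 (p i / q i) ≤ L) :
    (∏ i, p i) * 2 ^ (-L) ≤ ∏ i, q i := by
  by_cases h0 : ∃ i, p i = 0
  · obtain ⟨i, hi⟩ := h0
    rw [prod_eq_zero (mem_univ i) hi, zero_mul]
    exact prod_nonneg fun i _ => hq i
  push Not at h0
  have hp' : ∀ i, 0 < p i := fun i => (hp i).lt_of_ne' (h0 i)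
  calc (∏ i, p i) * 2 ^ (-L) ≤ (∏ i, p i) * 2 ^ (-∑ i, logb 2 (p i / q i)) :=
        mul_le_mul_of_nonneg_left (rpow_le_rpow_of_exponent_le one_le_two (neg_le_neg hL))
          (prod_nonneg fun i _ => hp i)
    _ = ∏ i, p i * 2 ^ (-logb 2 (p i / q i)) := by
        rw [← sum_neg_distrib, rpow_sum_of_pos two_pos, prod_mul_distrib]
    _ = ∏ i, q i := prod_congr rfl fun i _ => by
        have hqi := hpq i (hp' i)
        rw [rpow_neg zero_le_two, rpow_logb two_pos (by norm_num) (div_pos (hp' i) hqi), inv_div,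
          mul_div_cancel₀ _ (hp' i).ne']

section ProductDistribution

variable {ι B : Type*} [Fintype ι] [DecidableEq ι] [Fintype B] {p : ι → B → ℝ}

theorem sum_pi_prod_mul_prod (p f : ι → B → ℝ) :
    ∑ sh : ι → B, (∏ i, p i (sh i)) * ∏ i, f i (sh i) = ∏ i, ∑ b, p i b * f i b := by
  simp_rw [← prod_mul_distrib]
  exact (Fintype.prod_sum fun i b => p i b * f i b).symm

theorem sum_pi_prod_eq_one (hp : ∀ i, ∑ b, p i b = 1) :
    ∑ sh : ι → B, ∏ i, p i (sh i) = 1 := by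
  rw [← Fintype.prod_sum]
  simp [hp]

theorem sum_pi_prod_mul_apply (hp : ∀ i, ∑ b, p i b = 1) (i : ι) (g : B → ℝ) :
    ∑ sh : ι → B, (∏ k, p k (sh k)) * g (sh i) = ∑ b, p i b * g b := by
  have h := sum_pi_prod_mul_prod p fun k b => if k = i then g b else 1
  simp only [prod_ite_eq', mem_univ, if_true] at h
  rw [h, prod_eq_single i (fun k _ hk => by simp [hk, hp k]) (by simp)]
  simp

theorem sum_pi_prod_mul_apply_mul_apply (hp : ∀ i, ∑ b, p i b = 1) {i j : ι} (hij : i ≠ j)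
    (g h : B → ℝ) :
    ∑ sh : ι → B, (∏ k, p k (sh k)) * (g (sh i) * h (sh j)) =
      (∑ b, p i b * g b) * ∑ b, p j b * h b := by
  set f : ι → B → ℝ := fun k b => if k = i then g b else if k = j then h b else 1
  have hf : ∀ sh : ι → B, g (sh i) * h (sh j) = ∏ k, f k (sh k) := fun sh => by
    rw [prod_eq_mul i j hij (fun k _ hk => by simp [f, hk.1, hk.2]) (by simp) (by simp)]
    simp [f, hij.symm]
  simp_rw [hf]
  rw [sum_pi_prod_mul_prod,
    prod_eq_mul i j hij (fun k _ hk => by simp [f, hk.1, hk.2, hp k]) (by simp) (by simp)]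
  simp [f, hij.symm]

theorem sum_pi_prod_mul_sq_sum (hp : ∀ i, ∑ b, p i b = 1) (c : ι → B → ℝ)
    (hc : ∀ i, ∑ b, p i b * c i b = 0) :
    ∑ sh : ι → B, (∏ k, p k (sh k)) * (∑ i, c i (sh i)) ^ 2 = ∑ i, ∑ b, p i b * c i b ^ 2 := by
  simp_rw [sq, sum_mul_sum, mul_sum]
  rw [sum_comm]
  refine sum_congr rfl fun i _ => ?_
  rw [sum_comm, sum_eq_single i]
  · exact sum_pi_prod_mul_apply hp i fun b => c i b * c i b
  · intro j _ hji
    rw [sum_pi_prod_mul_apply_mul_apply hp hji.symm, hc, zero_mul]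
  · simp

theorem sum_mul_sub_sum_mul_sq {q : B → ℝ} (hq : ∑ b, q b = 1) (f : B → ℝ) :
    ∑ b, q b * (f b - ∑ c, q c * f c) ^ 2 = ∑ b, q b * f b ^ 2 - (∑ b, q b * f b) ^ 2 := by
  set μ := ∑ c, q c * f c
  have h : ∀ b, q b * (f b - μ) ^ 2 = q b * f b ^ 2 - 2 * μ * (q b * f b) + μ ^ 2 * q b :=
    fun b => by ring
  simp only [h, sum_add_distrib, sum_sub_distrib, ← mul_sum, hq]
  ring

theorem sum_pi_prod_filter_lt_le (hp0 : ∀ i b, 0 ≤ p i b) (hp : ∀ i, ∑ b, p i b = 1)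
    (h : ι → B → ℝ) {s t M : ℝ} (ht : 0 < t) (hs : ∑ i, ∑ b, p i b * h i b + t ≤ s)
    (hM : ∀ i, ∑ b, p i b * h i b ^ 2 ≤ M) :
    ∑ sh ∈ univ.filter (fun sh : ι → B => s < ∑ i, h i (sh i)), ∏ i, p i (sh i) ≤
      Fintype.card ι * M / t ^ 2 := by
  set c : ι → B → ℝ := fun i b => h i b - ∑ b', p i b' * h i b'
  have hc : ∀ i, ∑ b, p i b * c i b = 0 := fun i => by
    simp only [c, mul_sub, sum_sub_distrib, ← sum_mul, hp i, one_mul, sub_self]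
  have hvar : ∀ i, ∑ b, p i b * c i b ^ 2 ≤ M := fun i => by
    rw [sum_mul_sub_sum_mul_sq (hp i)]
    linarith [hM i, sq_nonneg (∑ b, p i b * h i b)]
  have hP : ∀ sh : ι → B, 0 ≤ ∏ i, p i (sh i) := fun sh => prod_nonneg fun i _ => hp0 i (sh i)
  -- Markov's inequality for `(∑ i, c i (sh i)) ^ 2`
  have hmarkov : ∀ sh ∈ univ.filter (fun sh : ι → B => s < ∑ i, h i (sh i)),
      ∏ i, p i (sh i) ≤ (∏ i, p i (sh i)) * (∑ i, c i (sh i)) ^ 2 / t ^ 2 := by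
    intro sh hsh
    have hlt : t < ∑ i, c i (sh i) := by
      simp only [c, sum_sub_distrib]
      linarith [(mem_filter.mp hsh).2]
    rw [le_div_iff₀ (by positivity)]
    exact mul_le_mul_of_nonneg_left (pow_le_pow_left₀ ht.le hlt.le 2) (hP sh)
  calc ∑ sh ∈ univ.filter (fun sh : ι → B => s < ∑ i, h i (sh i)), ∏ i, p i (sh i)
      ≤ ∑ sh : ι → B, (∏ i, p i (sh i)) * (∑ i, c i (sh i)) ^ 2 / t ^ 2 :=
        (sum_le_sum hmarkov).trans <| sum_le_sum_of_subset_of_nonneg (filter_subset _ _)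
          fun sh _ _ => div_nonneg (mul_nonneg (hP sh) (sq_nonneg _)) (sq_nonneg t)
    _ = (∑ i, ∑ b, p i b * c i b ^ 2) / t ^ 2 := by
        rw [← sum_div, sum_pi_prod_mul_sq_sum hp c hc]
    _ ≤ Fintype.card ι * M / t ^ 2 := by
        gcongr
        simpa using sum_le_sum fun i (_ : i ∈ univ) => hvar i

theorem one_sub_sub_mul_rpow_le_sum_filter_prod (hp0 : ∀ i b, 0 ≤ p i b)
    (hp : ∀ i, ∑ b, p i b = 1) {q : B → ℝ} (hq : ∀ b, 0 ≤ q b)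
    (hpq : ∀ i b, 0 < p i b → 0 < q b) (S : (ι → B) → Prop) {L α β : ℝ}
    (hα : ∑ sh ∈ univ.filter (fun sh => ¬ S sh), ∏ i, p i (sh i) ≤ α)
    (hβ : ∑ sh ∈ univ.filter (fun sh : ι → B => L < ∑ i, logb 2 (p i (sh i) / q (sh i))),
      ∏ i, p i (sh i) ≤ β) :
    (1 - α - β) * 2 ^ (-L) ≤ ∑ sh ∈ univ.filter S, ∏ i, q (sh i) := by
  set info : (ι → B) → ℝ := fun sh => ∑ i, logb 2 (p i (sh i) / q (sh i))
  set good := univ.filter fun sh => S sh ∧ info sh ≤ L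
  have hP : ∀ sh : ι → B, 0 ≤ ∏ i, p i (sh i) := fun sh => prod_nonneg fun i _ => hp0 i (sh i)
  have hgood : 1 - α - β ≤ ∑ sh ∈ good, ∏ i, p i (sh i) := by
    have hunion : ∑ sh : ι → B, ∏ i, p i (sh i) ≤
        ∑ sh ∈ good, ∏ i, p i (sh i) + ∑ sh ∈ univ.filter (fun sh => ¬ S sh), ∏ i, p i (sh i) +
          ∑ sh ∈ univ.filter (fun sh => L < info sh), ∏ i, p i (sh i) := by
      simp only [good, sum_filter, ← sum_add_distrib]
      refine sum_le_sum fun sh _ => ?_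
      by_cases hS : S sh <;> rcases le_or_gt (info sh) L with hI | hI <;>
        simp [hS, hI, not_lt.mpr, not_le.mpr, hP sh]
    rw [sum_pi_prod_eq_one hp] at hunion
    linarith
  calc (1 - α - β) * 2 ^ (-L) ≤ (∑ sh ∈ good, ∏ i, p i (sh i)) * 2 ^ (-L) := by gcongr
    _ ≤ ∑ sh ∈ good, ∏ i, q (sh i) := by
        rw [sum_mul]
        exact sum_le_sum fun sh hsh => prod_mul_rpow_neg_le_prod (fun i => hp0 i (sh i))
          (fun i => hq _) (fun i => hpq i (sh i)) (mem_filter.mp hsh).2.2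
    _ ≤ ∑ sh ∈ univ.filter S, ∏ i, q (sh i) :=
        sum_le_sum_of_subset_of_nonneg
          (fun sh hsh => mem_filter.mpr ⟨mem_univ _, (mem_filter.mp hsh).2.1⟩)
          fun sh _ _ => prod_nonneg fun i _ => hq _

end ProductDistribution

section EmpiricalDistribution

variable {A B : Type*} [Fintype A] [Fintype B] {m : ℕ}

theorem empDist_nonneg_s12 (y : Fin m → A) (a : A) : 0 ≤ empDist y a := by
  unfold empDist
  positivity

theorem inv_le_empDist_apply (y : Fin m → A) (i : Fin m) : (m : ℝ)⁻¹ ≤ empDist y (y i) := by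
  unfold empDist
  rw [inv_eq_one_div]
  gcongr
  exact_mod_cast card_pos.mpr ⟨i, by simp⟩

theorem sum_empDist_mul (y : Fin m → A) (f : A → ℝ) :
    ∑ a, empDist y a * f a = (∑ i, f (y i)) / m := by
  rw [← sum_fiberwise univ y fun i => f (y i), sum_div]
  refine sum_congr rfl fun a _ => ?_
  rw [sum_congr rfl fun i hi => by rw [(mem_filter.mp hi).2], sum_const, nsmul_eq_mul, empDist,
    div_mul_eq_mul_div]

theorem isPMF_empDist_s12 (hm : 0 < m) (y : Fin m → A) : IsPMF (empDist y) := by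
  refine ⟨empDist_nonneg_s12 y, ?_⟩
  simpa [hm.ne'] using sum_empDist_mul y fun _ => 1

/-- For `P = P̂ᴷ_x` and `W = P*` this is the block reconstruction law `Qᴷ`. -/
noncomputable def outDist (P : A → ℝ) (W : A → B → ℝ) (b : B) : ℝ :=
  ∑ a, P a * W a b

theorem outDist_nonneg {P : A → ℝ} {W : A → B → ℝ} (hP : IsPMF P) (hW : IsCondPMF W) (b : B) :
    0 ≤ outDist P W b :=
  sum_nonneg fun a _ => mul_nonneg (hP.1 a) ((hW a).1 b)

theorem outDist_le_one {P : A → ℝ} {W : A → B → ℝ} (hP : IsPMF P) (hW : IsCondPMF W) (b : B) :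
    outDist P W b ≤ 1 := by
  have hW1 : ∀ a, W a b ≤ 1 := fun a =>
    (single_le_sum (fun c _ => (hW a).1 c) (mem_univ b)).trans_eq (hW a).2
  calc outDist P W b ≤ ∑ a, P a := sum_le_sum fun a _ => mul_le_of_le_one_right (hP.1 a) (hW1 a)
    _ = 1 := hP.2

theorem div_le_outDist_empDist {W : A → B → ℝ} (hW : IsCondPMF W) (y : Fin m → A) (i : Fin m)
    (b : B) : W (y i) b / m ≤ outDist (empDist y) W b := by
  calc W (y i) b / m ≤ empDist y (y i) * W (y i) b := by
        rw [div_eq_inv_mul]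
        exact mul_le_mul_of_nonneg_right (inv_le_empDist_apply y i) ((hW _).1 b)
    _ ≤ outDist (empDist y) W b :=
        single_le_sum (f := fun a => empDist y a * W a b)
          (fun a _ => mul_nonneg (empDist_nonneg_s12 y a) ((hW a).1 b)) (mem_univ _)

theorem natCast_mul_sum_sum_empDist (hm : 0 < m) (y : Fin m → A) (W f : A → B → ℝ) :
    m * ∑ a, ∑ b, empDist y a * W a b * f a b = ∑ i, ∑ b, W (y i) b * f (y i) b := by
  simp_rw [mul_assoc, ← mul_sum]
  rw [sum_empDist_mul]
  field_simp

theorem natCast_mul_mutInf2_empDist (hm : 0 < m) (y : Fin m → A) (W : A → B → ℝ) :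
    m * mutInf2 (empDist y) W =
      ∑ i, ∑ b, W (y i) b * logb 2 (W (y i) b / outDist (empDist y) W b) :=
  natCast_mul_sum_sum_empDist hm y W fun _ b => logb 2 (_ / outDist (empDist y) W b)

end EmpiricalDistribution

section InformationDensity

variable {B : Type*} [Fintype B]

theorem mul_logb_sq_le_nine {p : ℝ} (hp0 : 0 < p) (hp1 : p ≤ 1) : p * logb 2 p ^ 2 ≤ 9 := by
  have hs : 0 < √p := sqrt_pos.mpr hp0
  have h4 : p * log p ^ 2 < 4 := by
    have h := abs_log_mul_self_lt √p hs (sqrt_le_one.mpr hp1)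
    rw [log_sqrt hp0.le, abs_lt] at h
    have hsq : (log p / 2 * √p) ^ 2 < 1 := by nlinarith
    rw [mul_pow, div_pow, sq_sqrt hp0.le] at hsq
    linarith
  have hlog2 : 0.48 < log 2 ^ 2 := by nlinarith [log_two_gt_d9]
  rw [logb, div_pow, mul_div_assoc', div_le_iff₀ (by positivity)]
  nlinarith

theorem sum_mul_logb_div_sq_le {w q : B → ℝ} (hw : IsPMF w) (hq : ∀ b, q b ≤ 1) {c : ℝ}
    (hc : 1 ≤ c) (hwq : ∀ b, w b ≤ c * q b) :
    ∑ b, w b * logb 2 (w b / q b) ^ 2 ≤ logb 2 c ^ 2 + 9 * Fintype.card B := by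
  have hterm : ∀ b, w b * logb 2 (w b / q b) ^ 2 ≤ w b * logb 2 c ^ 2 + 9 := by
    intro b
    rcases (hw.1 b).eq_or_lt with hwb | hwb
    · simp [← hwb]
    have hqb : 0 < q b := pos_of_mul_pos_right (hwb.trans_le (hwq b)) (by linarith)
    have hw1 : w b ≤ 1 := single_le_sum (fun b _ => hw.1 b) (mem_univ b) |>.trans_eq hw.2
    have hlo : logb 2 (w b) ≤ logb 2 (w b / q b) :=
      logb_le_logb_of_le one_lt_two hwb (le_div_self hwb.le hqb (hq b))
    have hhi : logb 2 (w b / q b) ≤ logb 2 c :=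
      logb_le_logb_of_le one_lt_two (div_pos hwb hqb) ((div_le_iff₀ hqb).mpr (hwq b))
    have hw0 : logb 2 (w b) ≤ 0 := logb_nonpos one_lt_two hwb.le hw1
    have hc0 : 0 ≤ logb 2 c := logb_nonneg one_lt_two hc
    have hsq : logb 2 (w b / q b) ^ 2 ≤ logb 2 c ^ 2 + logb 2 (w b) ^ 2 := by
      rcases le_total 0 (logb 2 (w b / q b)) with h | h <;> nlinarith
    nlinarith [mul_logb_sq_le_nine hwb hw1]
  calc ∑ b, w b * logb 2 (w b / q b) ^ 2 ≤ ∑ b, (w b * logb 2 c ^ 2 + 9) :=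
        sum_le_sum fun b _ => hterm b
    _ = logb 2 c ^ 2 + 9 * Fintype.card B := by
        rw [sum_add_distrib, ← sum_mul, hw.2, sum_const, card_univ, nsmul_eq_mul]
        ring

theorem sum_mul_sq_le_of_abs_le {w f : B → ℝ} (hw : IsPMF w) {M : ℝ} (hf : ∀ b, |f b| ≤ M) :
    ∑ b, w b * f b ^ 2 ≤ M ^ 2 := by
  have hf2 : ∀ b, f b ^ 2 ≤ M ^ 2 := fun b =>
    sq_abs (f b) ▸ pow_le_pow_left₀ (abs_nonneg _) (hf b) 2
  calc ∑ b, w b * f b ^ 2 ≤ ∑ b, w b * M ^ 2 :=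
        sum_le_sum fun b _ => mul_le_mul_of_nonneg_left (hf2 b) (hw.1 b)
    _ = M ^ 2 := by rw [← sum_mul, hw.2, one_mul]

end InformationDensity

/-- The sum of the Chebyshev bounds on the probabilities that the distortion of `m` blocks
exceeds its mean by `m δ` and that their information density exceeds its mean by `m ε`. -/
noncomputable def typicalityError (M δ ε : ℝ) (N m : ℕ) : ℝ :=
  (M ^ 2 / δ ^ 2 + (logb 2 m ^ 2 + 9 * N) / ε ^ 2) / m

theorem tendsto_typicalityError (M δ ε : ℝ) (N : ℕ) :
    Tendsto (typicalityError M δ ε N) atTop (nhds 0) := by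
  have hlog : Tendsto (fun x : ℝ => logb 2 x ^ 2 / x) atTop (nhds 0) := by
    have h := (tendsto_pow_log_div_mul_add_atTop 1 0 2 one_ne_zero).div_const (log 2 ^ 2)
    simp only [one_mul, add_zero, zero_div] at h
    refine h.congr fun x => ?_
    rw [logb, div_pow]
    ring
  have hinv : Tendsto (fun m : ℕ => (m : ℝ)⁻¹) atTop (nhds 0) :=
    tendsto_inv_atTop_zero.comp tendsto_natCast_atTop_atTop
  have h := ((hlog.comp tendsto_natCast_atTop_atTop).div_const (ε ^ 2)).add
    (hinv.const_mul (M ^ 2 / δ ^ 2 + 9 * N / ε ^ 2))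
  rw [zero_div, mul_zero, add_zero] at h
  refine h.congr fun m => ?_
  simp only [typicalityError, Function.comp_apply]
  ring

section MemorylessBall

variable {A B : Type*} [Fintype A] [Fintype B] {m : ℕ}

theorem one_sub_typicalityError_mul_rpow_le (hm : 0 < m) (y : Fin m → A) {W : A → B → ℝ}
    (hW : IsCondPMF W) {ρ : A → B → ℝ} {M δ ε T : ℝ} (hρ : ∀ a b, |ρ a b| ≤ M) (hδ : 0 < δ)
    (hε : 0 < ε) (hT : ∑ a, ∑ b, empDist y a * W a b * ρ a b + δ ≤ T) :
    (1 - typicalityError M δ ε (Fintype.card B) m) *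
        2 ^ (-(m : ℝ) * (mutInf2 (empDist y) W + ε)) ≤
      ∑ sh ∈ univ.filter (fun sh : Fin m → B => ∑ i, ρ (y i) (sh i) ≤ m * T),
        ∏ i, outDist (empDist y) W (sh i) := by
  set Q := outDist (empDist y) W
  have hm' : (0 : ℝ) < m := Nat.cast_pos.mpr hm
  have hP := isPMF_empDist_s12 hm y
  have hp0 : ∀ i b, 0 ≤ W (y i) b := fun i b => (hW _).1 b
  have hp1 : ∀ i, ∑ b, W (y i) b = 1 := fun i => (hW _).2
  have hWQ : ∀ i b, W (y i) b ≤ m * Q b := fun i b => by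
    have := div_le_outDist_empDist hW y i b
    rwa [div_le_iff₀ hm', mul_comm] at this
  have hα : ∑ sh ∈ univ.filter (fun sh : Fin m → B => ¬ ∑ i, ρ (y i) (sh i) ≤ m * T),
      ∏ i, W (y i) (sh i) ≤ M ^ 2 / δ ^ 2 / m := by
    have hs : ∑ i, ∑ b, W (y i) b * ρ (y i) b + m * δ ≤ m * T := by
      rw [← natCast_mul_sum_sum_empDist hm]
      nlinarith
    have h := sum_pi_prod_filter_lt_le hp0 hp1 (fun i b => ρ (y i) b) (mul_pos hm' hδ) hs
      fun i => sum_mul_sq_le_of_abs_le (hW _) (hρ _)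
    rw [filter_congr fun sh _ => not_le]
    refine h.trans_eq ?_
    simp only [Fintype.card_fin]
    field_simp
  have hβ : ∑ sh ∈ univ.filter (fun sh : Fin m → B =>
        m * (mutInf2 (empDist y) W + ε) < ∑ i, logb 2 (W (y i) (sh i) / Q (sh i))),
      ∏ i, W (y i) (sh i) ≤ (logb 2 m ^ 2 + 9 * Fintype.card B) / ε ^ 2 / m := by
    have hs : ∑ i, ∑ b, W (y i) b * logb 2 (W (y i) b / Q b) + m * ε ≤
        m * (mutInf2 (empDist y) W + ε) := by
      rw [← natCast_mul_mutInf2_empDist hm]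
      linarith
    have h := sum_pi_prod_filter_lt_le hp0 hp1 (fun i b => logb 2 (W (y i) b / Q b))
      (mul_pos hm' hε) hs fun i => sum_mul_logb_div_sq_le (hW _) (outDist_le_one hP hW)
        (by exact_mod_cast hm) (hWQ i)
    refine h.trans_eq ?_
    simp only [Fintype.card_fin]
    field_simp
  calc (1 - typicalityError M δ ε (Fintype.card B) m) *
        2 ^ (-(m : ℝ) * (mutInf2 (empDist y) W + ε))
      = (1 - M ^ 2 / δ ^ 2 / m - (logb 2 m ^ 2 + 9 * Fintype.card B) / ε ^ 2 / m) *
          2 ^ (-(m * (mutInf2 (empDist y) W + ε))) := by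
        rw [typicalityError, neg_mul]
        ring
    _ ≤ _ := one_sub_sub_mul_rpow_le_sum_filter_prod hp0 hp1 (outDist_nonneg hP hW)
        (fun i b hb => pos_of_mul_pos_right (hb.trans_le (hWQ i b)) hm'.le) _ hα hβ

end MemorylessBall

theorem abs_dSeq_le {X Xh : Type*} {d : X → Xh → ℝ} (hd : ∀ x xh, 0 ≤ d x xh) {C : ℝ}
    (hC : ∀ x xh, d x xh ≤ C) {n : ℕ} (a : Fin n → X) (b : Fin n → Xh) :
    |dSeq d a b| ≤ n * C := by
  rw [dSeq, abs_of_nonneg (sum_nonneg fun i _ => hd _ _)]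
  simpa using sum_le_sum fun i (_ : i ∈ univ) => hC (a i) (b i)

theorem block_memoryless_ball_lower_bound_general
    {X Xh : Type*} [Fintype X] [Fintype Xh]
    (d : X → Xh → ℝ) (hd : ∀ x xh, 0 ≤ d x xh) (D : ℝ)
    (K k : ℕ) (hK : 0 < K)
    (δ : ℝ) (hδ : 0 < δ)
    (ε : ℝ) (hε : 0 < ε) :
    ∃ εseq : ℕ → ℝ, Tendsto εseq atTop (nhds 0) ∧
      ∀ (m : ℕ), 0 < m → ∀ (x : Fin (m * (K + k)) → X)
        (Pstar : (Fin K → X) → (Fin K → Xh) → ℝ),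
        IsCondPMF Pstar →
        (∑ a, ∑ b, kType x a * Pstar a b * dSeq d a b) ≤
          (K : ℝ) * (D - (k : ℝ) * ((⨆ p : X × Xh, d p.1 p.2) - D) / K - δ / K) →
        mutInf2 (kType x) Pstar =
          RD (dSeq d) ((K : ℝ) * (D - (k : ℝ) * ((⨆ p : X × Xh, d p.1 p.2) - D) / K - δ / K))
            (kType x) →
        (1 - 2 * εseq m) *
            (2 : ℝ) ^ (-(m : ℝ) *
              (RD (dSeq d)
                  ((K : ℝ) * (D - (k : ℝ) * ((⨆ p : X × Xh, d p.1 p.2) - D) / K - δ / K))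
                  (kType x) + ε)) ≤
          ∑ sh ∈ Finset.univ.filter (fun sh : Fin m → (Fin K → Xh) =>
              (∑ i, dSeq d (blockOf x i) (sh i)) ≤
                (m : ℝ) * ((K : ℝ) * (D - (k : ℝ) * ((⨆ p : X × Xh, d p.1 p.2) - D) / K))),
            ∏ i, (∑ a, kType x a * Pstar a (sh i)) := by
  set Dmax := ⨆ p : X × Xh, d p.1 p.2
  have hdle : ∀ a b, d a b ≤ Dmax := fun a b =>
    le_ciSup (f := fun p : X × Xh => d p.1 p.2) (Set.finite_range _).bddAbove (a, b)
  set e := typicalityError (K * Dmax) δ ε (Fintype.card (Fin K → Xh))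
  refine ⟨e, tendsto_typicalityError _ _ _ _, fun m hm x Pstar hP hdist hopt => ?_⟩
  have hT : ∑ a, ∑ b, kType x a * Pstar a b * dSeq d a b + δ ≤
      K * (D - k * (Dmax - D) / K) := by
    have hK' : (K : ℝ) ≠ 0 := Nat.cast_ne_zero.mpr hK.ne'
    calc _ ≤ K * (D - k * (Dmax - D) / K - δ / K) + δ := by linarith
      _ = _ := by field_simp; ring
  have he : 0 ≤ e m := by unfold e typicalityError; positivity
  rw [← hopt]
  calc (1 - 2 * e m) * 2 ^ (-(m : ℝ) * (mutInf2 (kType x) Pstar + ε))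
      ≤ (1 - e m) * 2 ^ (-(m : ℝ) * (mutInf2 (kType x) Pstar + ε)) := by gcongr; linarith
    _ ≤ _ := one_sub_typicalityError_mul_rpow_le hm (fun i => blockOf x i) hP
        (abs_dSeq_le hd hdle) hδ hε hT

/-- Block-memoryless lower bound. With `D_max = max d`,
`δ₂ = k(D_max − D)/K` and `D' = D − δ₂ − δ/K > 0`, for any conditional distribution `P*`
achieving the block rate–distortion function `R_K(D', P̂ᴷ_x)` with induced block reconstruction
distribution `Qᴷ(ŝ) = Σ_s P̂ᴷ_x(s) P*(ŝ|s)`,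
`Σ_{(ŝ₁,…,ŝ_m) : Σᵢ d(x̲ᵢ,ŝᵢ) ≤ mK(D−δ₂)} Πᵢ Qᴷ(ŝᵢ) ≥ (1 − 2ε_m) 2^{−m[R_K(D',P̂ᴷ_x) + ε]}`
for a sequence `ε_m → 0` uniform in `x`. -/
theorem block_memoryless_ball_lower_bound
    {X Xh : Type*} [Fintype X] [Fintype Xh] [Nonempty X] [Nonempty Xh]
    (d : X → Xh → ℝ) (hd : ∀ x xh, 0 ≤ d x xh) (D : ℝ)
    (hcover : ∀ x : X, ∃ xh : Xh, d x xh = 0)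
    (K k : ℕ) (hK : 0 < K) (hk : 0 < k)
    (δ : ℝ) (hδ : 0 < δ)
    (hD' : 0 < D - (k : ℝ) * ((⨆ p : X × Xh, d p.1 p.2) - D) / K - δ / K)
    (ε : ℝ) (hε : 0 < ε) :
    ∃ εseq : ℕ → ℝ, Tendsto εseq atTop (nhds 0) ∧
      ∀ (m : ℕ), 0 < m → ∀ (x : Fin (m * (K + k)) → X)
        (Pstar : (Fin K → X) → (Fin K → Xh) → ℝ),
        IsCondPMF Pstar →
        (∑ a, ∑ b, kType x a * Pstar a b * dSeq d a b) ≤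
          (K : ℝ) * (D - (k : ℝ) * ((⨆ p : X × Xh, d p.1 p.2) - D) / K - δ / K) →
        mutInf2 (kType x) Pstar =
          RD (dSeq d) ((K : ℝ) * (D - (k : ℝ) * ((⨆ p : X × Xh, d p.1 p.2) - D) / K - δ / K))
            (kType x) →
        (1 - 2 * εseq m) *
            (2 : ℝ) ^ (-(m : ℝ) *
              (RD (dSeq d)
                  ((K : ℝ) * (D - (k : ℝ) * ((⨆ p : X × Xh, d p.1 p.2) - D) / K - δ / K))
                  (kType x) + ε)) ≤
          ∑ sh ∈ Finset.univ.filter (fun sh : Fin m → (Fin K → Xh) =>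
              (∑ i, dSeq d (blockOf x i) (sh i)) ≤
                (m : ℝ) * ((K : ℝ) * (D - (k : ℝ) * ((⨆ p : X × Xh, d p.1 p.2) - D) / K))),
            ∏ i, (∑ a, kType x a * Pstar a (sh i)) :=
  block_memoryless_ball_lower_bound_general d hd D K k hK δ hδ ε hε
end
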